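/- arXiv:1703.10306 — 3 statements merged into one kernel-verified Lean document; each statement's English description precedes it below -/
import Mathlib

section
/- For every x ∈ (0,1) and b > 0, setting κ(x,b) = (√(1-x)·b - √(1+x))/(√(1-x)·b + √(1+x)) and ψ̄ = (b² - 1)/(b² + 1), one has 1/2 - (2/π)·arctan(κ(x,b)) = (1/π)·arccos((ψ̄ - x)/(1 - ψ̄ x)). In particular (ψ̄ - x)/(1 - ψ̄ x) ∈ [-1,1], so the arccosine is well defined. -/
open Real

/-!
With `p = √(1-x)·b` and `q = √(1+x)`, the argument of the arccosine equals
`(p² - q²)/(p² + q²)`, and `κ = (p - q)/(p + q)` satisfies `2κ/(1+κ²) = (p² - q²)/(p² + q²)`.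
Since `|κ| < 1`, the angle `θ = arctan κ` lies in `(-π/4, π/4)` and `sin 2θ = 2κ/(1+κ²)`, so the
arccosine equals `π/2 - 2θ`.
-/

theorem Real.sin_two_mul_arctan (t : ℝ) : sin (2 * arctan t) = 2 * t / (1 + t ^ 2) := by
  have hs : √(1 + t ^ 2) ^ 2 = 1 + t ^ 2 := sq_sqrt (by positivity)
  have hs0 : √(1 + t ^ 2) ≠ 0 := (sqrt_pos.2 (by positivity)).ne'
  rw [sin_two_mul, sin_arctan, cos_arctan]
  field_simp
  rw [hs]

theorem Real.arccos_two_mul_div_one_add_sq {t : ℝ} (h₁ : -1 ≤ t) (h₂ : t ≤ 1) :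
    arccos (2 * t / (1 + t ^ 2)) = π / 2 - 2 * arctan t := by
  have hlo : -(π / 4) ≤ arctan t := by
    simpa only [arctan_neg, arctan_one] using arctan_strictMono.monotone h₁
  have hhi : arctan t ≤ π / 4 := by
    simpa only [arctan_one] using arctan_strictMono.monotone h₂
  rw [← sin_two_mul_arctan, ← cos_pi_div_two_sub]
  exact arccos_cos (by linarith) (by linarith)

theorem abs_sub_div_add_lt_one {p q : ℝ} (hp : 0 < p) (hq : 0 < q) : |(p - q) / (p + q)| < 1 := by
  rw [abs_div, abs_of_pos (add_pos hp hq), div_lt_one (add_pos hp hq), abs_lt]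
  constructor <;> linarith

theorem two_mul_div_one_add_sq_sub_div_add (p q : ℝ) :
    2 * ((p - q) / (p + q)) / (1 + ((p - q) / (p + q)) ^ 2) = (p ^ 2 - q ^ 2) / (p ^ 2 + q ^ 2) := by
  rcases eq_or_ne (p + q) 0 with hpq | hpq
  · obtain rfl : p = -q := eq_neg_of_add_eq_zero_left hpq
    simp
  · have hsq : p ^ 2 + q ^ 2 ≠ 0 := by
      contrapose! hpq
      have hp : p = 0 := by nlinarith [sq_nonneg q]
      have hq : q = 0 := by nlinarith [sq_nonneg p]
      rw [hp, hq, add_zero]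
    field_simp
    ring

theorem sub_one_div_add_one_sub_div_one_sub_mul {u : ℝ} (hu : u + 1 ≠ 0) (x : ℝ) :
    ((u - 1) / (u + 1) - x) / (1 - (u - 1) / (u + 1) * x)
      = ((1 - x) * u - (1 + x)) / ((1 - x) * u + (1 + x)) := by
  have hnum : (u - 1) / (u + 1) - x = ((1 - x) * u - (1 + x)) / (u + 1) := by
    field_simp
    ring
  have hden : 1 - (u - 1) / (u + 1) * x = ((1 - x) * u + (1 + x)) / (u + 1) := by
    field_simp
    ring
  rw [hnum, hden, div_div_div_cancel_right₀ hu]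

/-- For `x ∈ (0,1)` and `b > 0`, with
`κ(x,b) = (√(1-x)·b - √(1+x))/(√(1-x)·b + √(1+x))` and `ψ̄ = (b²-1)/(b²+1)`, one has
`1/2 - (2/π)·arctan(κ(x,b)) = (1/π)·arccos((ψ̄-x)/(1-ψ̄x))`, the argument of the
arccosine lying in `[-1,1]`. -/
theorem half_sub_arctan_eq_arccos (x b : ℝ) (hx : x ∈ Set.Ioo (0 : ℝ) 1) (hb : 0 < b) :
    ((b ^ 2 - 1) / (b ^ 2 + 1) - x) / (1 - (b ^ 2 - 1) / (b ^ 2 + 1) * x)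
        ∈ Set.Icc (-1 : ℝ) 1 ∧
    1 / 2 - (2 / Real.pi) * Real.arctan
        ((Real.sqrt (1 - x) * b - Real.sqrt (1 + x)) /
          (Real.sqrt (1 - x) * b + Real.sqrt (1 + x)))
      = (1 / Real.pi) * Real.arccos
          (((b ^ 2 - 1) / (b ^ 2 + 1) - x) / (1 - (b ^ 2 - 1) / (b ^ 2 + 1) * x)) := by
  obtain ⟨hx₀, hx₁⟩ := hx
  set κ := (√(1 - x) * b - √(1 + x)) / (√(1 - x) * b + √(1 + x))
  have hy : ((b ^ 2 - 1) / (b ^ 2 + 1) - x) / (1 - (b ^ 2 - 1) / (b ^ 2 + 1) * x)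
      = 2 * κ / (1 + κ ^ 2) := by
    rw [two_mul_div_one_add_sq_sub_div_add, mul_pow, sq_sqrt (by linarith), sq_sqrt (by linarith),
      sub_one_div_add_one_sub_div_one_sub_mul (by positivity)]
  have hκ : |κ| < 1 :=
    abs_sub_div_add_lt_one (mul_pos (sqrt_pos.2 (by linarith)) hb) (sqrt_pos.2 (by linarith))
  obtain ⟨hκ₁, hκ₂⟩ := abs_lt.1 hκ
  rw [hy, arccos_two_mul_div_one_add_sq hκ₁.le hκ₂.le, ← sin_two_mul_arctan]
  refine ⟨⟨neg_one_le_sin _, sin_le_one _⟩, ?_⟩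
  field_simp
end

section
/- Let Z_1, Z_2 be independent standard Lévy(1/2) random variables and let a, b > 0. Then P(a·Z_1 - b·Z_2 < 0) = 1/2 - (2/π)·arctan((√a - √b)/(√a + √b)) = (2/π)·arctan(√(b/a)). -/
open MeasureTheory ProbabilityTheory Filter

noncomputable section

/-- The law of a standard Lévy(1/2) random variable: density
`(2π)^{-1/2} z^{-3/2} exp(-1/(2z))` on `(0,∞)`, `0` elsewhere. -/
def levyHalf : Measure ℝ :=
  volume.withDensity fun z =>
    ENNReal.ofReal (if 0 < z then
      (2 * Real.pi) ^ (-(1 : ℝ) / 2) * z ^ (-(3 : ℝ) / 2) * Real.exp (-1 / (2 * z))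
    else 0)

/-!
Under `z = u⁻²` the Lévy(1/2) law becomes the half-normal law, so `Z₁, Z₂` may be read as
`N₁⁻², N₂⁻²` for independent standard Gaussians, and `a Z₁ < b Z₂` says `|N₁| / |N₂| > √(a/b)`.
The ratio of two independent half-normal variables has density `(2/π) (1 + t²)⁻¹` on `(0, ∞)`
(substitute `u = v t` and integrate out `v`), so the probability is
`1 - (2/π) arctan √(a/b) = (2/π) arctan √(b/a)`.
-/

open Real Set
open scoped ENNReal NNReal

lemma integral_Ioi_mul_exp_neg_mul_sq {b : ℝ} (hb : 0 < b) :
    ∫ r in Ioi (0 : ℝ), r * exp (-b * r ^ 2) = (2 * b)⁻¹ := by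
  have h := integral_mul_cexp_neg_mul_sq (b := (b : ℂ)) (by simpa using hb)
  apply Complex.ofReal_injective
  rw [← integral_complex_ofReal]
  push_cast
  exact h

lemma arctan_one_sub_div_one_add {x : ℝ} (hx : -1 < x) :
    arctan ((1 - x) / (1 + x)) = π / 4 - arctan x := by
  have h1x : 0 < 1 + x := by linarith
  have hlt : x * ((1 - x) / (1 + x)) < 1 := by
    rw [← mul_div_assoc, div_lt_one h1x]
    nlinarith [sq_nonneg x]
  have hsum : (x + (1 - x) / (1 + x)) / (1 - x * ((1 - x) / (1 + x))) = 1 := by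
    rw [div_eq_one_iff_eq]
    · field_simp
      ring
    · have hden : 1 - x * ((1 - x) / (1 + x)) = (1 + x ^ 2) / (1 + x) := by
        field_simp
        ring
      rw [hden]
      positivity
  have := arctan_add hlt
  rw [hsum, arctan_one] at this
  linarith

lemma injOn_inv_sq : InjOn (fun u : ℝ => (u ^ 2)⁻¹) (Ioi 0) := by
  intro x hx y hy hxy
  exact (sq_eq_sq₀ (mem_Ioi.1 hx).le (mem_Ioi.1 hy).le).1 (inv_injective hxy)

lemma image_inv_sq_Ioi : (fun u : ℝ => (u ^ 2)⁻¹) '' Ioi 0 = Ioi 0 := by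
  refine Subset.antisymm (image_subset_iff.2 fun u hu => by simp [mem_Ioi.1 hu]) fun y hy => ?_
  refine ⟨(√y)⁻¹, by simpa using hy, ?_⟩
  simp [sq_sqrt (le_of_lt hy)]

lemma hasDerivAt_inv_sq {u : ℝ} (hu : u ≠ 0) :
    HasDerivAt (fun u : ℝ => (u ^ 2)⁻¹) (-2 / u ^ 3) u := by
  refine ((hasDerivAt_pow 2 u).inv (pow_ne_zero 2 hu)).congr_deriv ?_
  field_simp
  ring

lemma setLIntegral_Ioi_mul_left {v : ℝ} (hv : 0 < v) (k : ℝ) (F : ℝ → ℝ≥0∞) :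
    ∫⁻ u in Ioi (v * k), F u = ∫⁻ t in Ioi k, ENNReal.ofReal v * F (v * t) := by
  have himage : (v * ·) '' Ioi k = Ioi (v * k) := by
    simp [image_mul_left_Ioi hv]
  rw [← himage, lintegral_image_eq_lintegral_abs_deriv_mul measurableSet_Ioi
    (fun t _ => ((hasDerivAt_id' t).const_mul v).hasDerivWithinAt)
    (mul_right_injective₀ hv.ne').injOn]
  simp [abs_of_pos hv]

lemma lintegral_Ioi_mul_exp_neg_mul_sq {b : ℝ} (hb : 0 < b) :
    ∫⁻ v in Ioi 0, ENNReal.ofReal (v * exp (-b * v ^ 2)) = ENNReal.ofReal (2 * b)⁻¹ := by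
  rw [← ofReal_integral_eq_lintegral_ofReal (integrable_mul_exp_neg_mul_sq hb).integrableOn
      ((ae_restrict_iff' measurableSet_Ioi).2 (ae_of_all _ fun v hv =>
        mul_nonneg (mem_Ioi.1 hv).le (exp_nonneg _))),
    integral_Ioi_mul_exp_neg_mul_sq hb]

lemma lintegral_Ioi_inv_one_add_sq (k : ℝ) :
    ∫⁻ t in Ioi k, ENNReal.ofReal (1 + t ^ 2)⁻¹ = ENNReal.ofReal (π / 2 - arctan k) := by
  rw [← ofReal_integral_eq_lintegral_ofReal integrable_inv_one_add_sq.integrableOn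
      (ae_of_all _ fun t => by positivity), integral_Ioi_inv_one_add_sq]

lemma gaussianPDFReal_mul_gaussianPDFReal_mul_left (v t : ℝ) :
    gaussianPDFReal 0 1 v * gaussianPDFReal 0 1 (v * t)
      = (2 * π)⁻¹ * exp (-((1 + t ^ 2) / 2) * v ^ 2) := by
  simp only [gaussianPDFReal, NNReal.coe_one, mul_one, sub_zero]
  rw [mul_mul_mul_comm, ← mul_inv, mul_self_sqrt (by positivity), ← exp_add]
  ring_nf

lemma measure_lt_const_mul_eq_lintegral {Ω : Type*} [MeasurableSpace Ω] {μ : Measure Ω}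
    [IsFiniteMeasure μ] {X Y : Ω → ℝ} (hX : Measurable X) (hY : Measurable Y)
    (hXY : IndepFun X Y μ) (c : ℝ) :
    μ {ω | X ω < c * Y ω} = ∫⁻ y, μ.map X (Iio (c * y)) ∂μ.map Y := by
  have hS : MeasurableSet {p : ℝ × ℝ | p.1 < c * p.2} :=
    measurableSet_lt measurable_fst (measurable_snd.const_mul c)
  calc μ {ω | X ω < c * Y ω} = μ.map (fun ω => (X ω, Y ω)) {p | p.1 < c * p.2} :=
        (Measure.map_apply (hX.prodMk hY) hS).symm
    _ = (μ.map X).prod (μ.map Y) {p | p.1 < c * p.2} := by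
        rw [hXY.map_prod_eq_prod_map_map hX.aemeasurable hY.aemeasurable]
    _ = ∫⁻ y, μ.map X (Iio (c * y)) ∂μ.map Y := Measure.prod_apply_symm hS

def levyHalfPDFReal (z : ℝ) : ℝ :=
  if 0 < z then (2 * π) ^ (-(1 : ℝ) / 2) * z ^ (-(3 : ℝ) / 2) * exp (-1 / (2 * z)) else 0

lemma levyHalf_eq_withDensity :
    levyHalf = volume.withDensity fun z => ENNReal.ofReal (levyHalfPDFReal z) := rfl

lemma measurable_levyHalfPDFReal : Measurable levyHalfPDFReal :=
  Measurable.ite measurableSet_Ioi (by fun_prop) measurable_const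

lemma levyHalfPDFReal_inv_sq {u : ℝ} (hu : 0 < u) :
    levyHalfPDFReal (u ^ 2)⁻¹ = u ^ 3 * gaussianPDFReal 0 1 u := by
  have hpow : ((u ^ 2)⁻¹ : ℝ) ^ (-(3 : ℝ) / 2) = u ^ 3 := by
    rw [← rpow_natCast u 2, ← rpow_neg_one, ← rpow_mul hu.le, ← rpow_mul hu.le]
    norm_num
  have hconst : (2 * π) ^ (-(1 : ℝ) / 2) = (√(2 * π))⁻¹ := by
    rw [sqrt_eq_rpow, ← rpow_neg (by positivity)]
    norm_num
  rw [levyHalfPDFReal, if_pos (by positivity), hpow, hconst]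
  simp only [gaussianPDFReal, NNReal.coe_one, mul_one, sub_zero]
  field_simp

lemma lintegral_levyHalf (g : ℝ → ℝ≥0∞) :
    ∫⁻ z, g z ∂levyHalf
      = ∫⁻ u in Ioi 0, ENNReal.ofReal (2 * gaussianPDFReal 0 1 u) * g (u ^ 2)⁻¹ := by
  have hsupport : (fun z => ENNReal.ofReal (levyHalfPDFReal z) * g z).support ⊆ Ioi 0 :=
    fun z hz => mem_Ioi.2 <| not_le.1 fun h => hz (by simp [levyHalfPDFReal, not_lt.2 h])
  rw [levyHalf_eq_withDensity, lintegral_withDensity_eq_lintegral_mul_non_measurable _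
      measurable_levyHalfPDFReal.ennreal_ofReal (ae_of_all _ fun _ => ENNReal.ofReal_lt_top)]
  simp only [Pi.mul_apply]
  conv_lhs => rw [← setLIntegral_eq_of_support_subset hsupport, ← image_inv_sq_Ioi]
  rw [lintegral_image_eq_lintegral_abs_deriv_mul measurableSet_Ioi
      (fun u hu => (hasDerivAt_inv_sq (mem_Ioi.1 hu).ne').hasDerivWithinAt) injOn_inv_sq]
  refine setLIntegral_congr_fun measurableSet_Ioi fun u hu => ?_
  have hu₀ : 0 < u := hu
  rw [← mul_assoc, ← ENNReal.ofReal_mul (abs_nonneg _), levyHalfPDFReal_inv_sq hu₀,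
    abs_div, abs_neg, abs_two, abs_of_pos (pow_pos hu₀ 3)]
  field_simp

lemma levyHalf_Iio {t : ℝ} (ht : 0 < t) :
    levyHalf (Iio t) = ∫⁻ u in Ioi (√t)⁻¹, ENNReal.ofReal (2 * gaussianPDFReal 0 1 u) := by
  have hmem {u : ℝ} (hu : 0 < u) : (u ^ 2)⁻¹ < t ↔ (√t)⁻¹ < u := by
    rw [inv_lt_comm₀ (by positivity) ht, ← sqrt_inv, sqrt_lt' hu]
  have hsupport : ((Ioi (√t)⁻¹).indicator fun u =>
      ENNReal.ofReal (2 * gaussianPDFReal 0 1 u)).support ⊆ Ioi 0 :=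
    support_indicator_subset.trans fun u hu => (by positivity : (0:ℝ) < (√t)⁻¹).trans hu
  rw [← lintegral_indicator_one measurableSet_Iio, lintegral_levyHalf]
  conv_rhs => rw [← lintegral_indicator measurableSet_Ioi,
    ← setLIntegral_eq_of_support_subset hsupport]
  refine setLIntegral_congr_fun measurableSet_Ioi fun u hu => ?_
  simp only [indicator, mem_Iio, mem_Ioi, hmem hu, Pi.one_apply]
  split_ifs <;> simp

lemma two_gaussianPDFReal_mul_levyHalf_Iio {c v : ℝ} (hc : 0 < c) (hv : 0 < v) :
    ENNReal.ofReal (2 * gaussianPDFReal 0 1 v) * levyHalf (Iio (c * (v ^ 2)⁻¹))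
      = ∫⁻ t in Ioi (√c)⁻¹,
          ENNReal.ofReal (2 / π) * ENNReal.ofReal (v * exp (-((1 + t ^ 2) / 2) * v ^ 2)) := by
  have hlower : (√(c * (v ^ 2)⁻¹))⁻¹ = v * (√c)⁻¹ := by
    rw [sqrt_mul hc.le, sqrt_inv, sqrt_sq hv.le, mul_inv, inv_inv, mul_comm]
  rw [levyHalf_Iio (by positivity), hlower, setLIntegral_Ioi_mul_left hv,
    ← lintegral_const_mul' _ _ ENNReal.ofReal_ne_top]
  refine setLIntegral_congr_fun measurableSet_Ioi fun t _ => ?_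
  rw [← ENNReal.ofReal_mul hv.le,
    ← ENNReal.ofReal_mul (mul_nonneg zero_le_two (gaussianPDFReal_nonneg 0 1 v)),
    ← ENNReal.ofReal_mul (by positivity)]
  congr 1
  rw [show 2 * gaussianPDFReal 0 1 v * (v * (2 * gaussianPDFReal 0 1 (v * t)))
      = 4 * v * (gaussianPDFReal 0 1 v * gaussianPDFReal 0 1 (v * t)) by ring,
    gaussianPDFReal_mul_gaussianPDFReal_mul_left]
  field_simp
  ring

lemma lintegral_levyHalf_Iio_mul {c : ℝ} (hc : 0 < c) :
    ∫⁻ y, levyHalf (Iio (c * y)) ∂levyHalf = ENNReal.ofReal (2 / π * arctan √c) := by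
  set k := (√c)⁻¹
  set Q : ℝ → ℝ → ℝ≥0∞ := fun v t =>
    ENNReal.ofReal (2 / π) * ENNReal.ofReal (v * exp (-((1 + t ^ 2) / 2) * v ^ 2))
  have hmeas : AEMeasurable (Function.uncurry Q)
      ((volume.restrict (Ioi 0)).prod (volume.restrict (Ioi k))) := by
    unfold Q Function.uncurry
    fun_prop
  calc ∫⁻ y, levyHalf (Iio (c * y)) ∂levyHalf = ∫⁻ v in Ioi 0, ∫⁻ t in Ioi k, Q v t := by
        rw [lintegral_levyHalf]
        exact setLIntegral_congr_fun measurableSet_Ioi fun v hv =>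
          two_gaussianPDFReal_mul_levyHalf_Iio hc hv
    _ = ∫⁻ t in Ioi k, ∫⁻ v in Ioi 0, Q v t := lintegral_lintegral_swap hmeas
    _ = ∫⁻ t in Ioi k, ENNReal.ofReal (2 / π) * ENNReal.ofReal (1 + t ^ 2)⁻¹ := by
        refine lintegral_congr fun t => ?_
        rw [lintegral_const_mul' _ _ ENNReal.ofReal_ne_top,
          lintegral_Ioi_mul_exp_neg_mul_sq (by positivity)]
        congr 3
        ring
    _ = ENNReal.ofReal (2 / π * arctan √c) := by
        rw [lintegral_const_mul' _ _ ENNReal.ofReal_ne_top, lintegral_Ioi_inv_one_add_sq,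
          ← ENNReal.ofReal_mul (by positivity), arctan_inv_of_pos (by positivity)]
        ring_nf

/-- If `Z₁, Z₂` are independent standard Lévy(1/2) random variables and
`a, b > 0`, then `P(a·Z₁ - b·Z₂ < 0) = 1/2 - (2/π)·arctan((√a-√b)/(√a+√b)) = (2/π)·arctan(√(b/a))`. -/
theorem levy_half_diff_neg_prob
    {Ω : Type*} [MeasurableSpace Ω] (μ : Measure Ω) [IsProbabilityMeasure μ]
    (Z₁ Z₂ : Ω → ℝ) (h₁ : Measurable Z₁) (h₂ : Measurable Z₂)
    (hl₁ : μ.map Z₁ = levyHalf) (hl₂ : μ.map Z₂ = levyHalf)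
    (hind : IndepFun Z₁ Z₂ μ) (a b : ℝ) (ha : 0 < a) (hb : 0 < b) :
    (μ {ω | a * Z₁ ω - b * Z₂ ω < 0}).toReal
        = 1 / 2 - (2 / Real.pi) * Real.arctan
            ((Real.sqrt a - Real.sqrt b) / (Real.sqrt a + Real.sqrt b)) ∧
    (μ {ω | a * Z₁ ω - b * Z₂ ω < 0}).toReal
        = (2 / Real.pi) * Real.arctan (Real.sqrt (b / a)) := by
  have hset : {ω | a * Z₁ ω - b * Z₂ ω < 0} = {ω | Z₁ ω < b / a * Z₂ ω} := by
    ext ω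
    change a * Z₁ ω - b * Z₂ ω < 0 ↔ Z₁ ω < b / a * Z₂ ω
    rw [sub_neg, div_mul_eq_mul_div, lt_div_iff₀ ha, mul_comm]
  have hprob : (μ {ω | a * Z₁ ω - b * Z₂ ω < 0}).toReal = 2 / π * arctan √(b / a) := by
    rw [hset, measure_lt_const_mul_eq_lintegral h₁ h₂ hind, hl₁, hl₂,
      lintegral_levyHalf_Iio_mul (div_pos hb ha), ENNReal.toReal_ofReal (by positivity)]
  have hratio : (√a - √b) / (√a + √b) = (1 - √(b / a)) / (1 + √(b / a)) := by
    rw [sqrt_div' _ ha.le]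
    field_simp
  refine ⟨?_, hprob⟩
  rw [hprob, hratio, arctan_one_sub_div_one_add (by linarith [sqrt_nonneg (b / a)])]
  field_simp
  ring
end
end

section
/- Let (S_n)_{n≥0} be any real sequence with S_0 = 0, equipped with the sign convention, crossing times t_i and inter-half-excursion times τ_i. Fix x ∈ [0,1) and k ≥ 1, and suppose sgn(S_1) = +1 and t_{2k} < ∞. Then ∑_{i=1}^s sgn(S_i) > x·s holds for all 1 ≤ s ≤ t_{2k} if and only if ∑_{i=1}^m (τ_{2i-1} - τ_{2i}) > x·∑_{i=1}^m (τ_{2i-1} + τ_{2i}) holds for all 1 ≤ m ≤ k. -/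
open Finset

noncomputable section

/-- Sign sequence of a walk, with the convention `sgn(S₀) = +1` and
`sgn(Sₙ) = sgn(Sₙ₋₁)` when `Sₙ = 0`. -/
def walkSgn (S : ℕ → ℝ) : ℕ → ℤ
  | 0 => 1
  | n + 1 => if 0 < S (n + 1) then 1 else if S (n + 1) < 0 then -1 else walkSgn S n

/-- Crossing times `t₀ = 0`, `tᵢ = min {s > tᵢ₋₁ : sgn(Sₛ)·sgn(Sₛ₊₁) = -1}`. -/
def crossTime (S : ℕ → ℝ) : ℕ → ℕ
  | 0 => 0
  | i + 1 => sInf {s : ℕ | crossTime S i < s ∧ walkSgn S s * walkSgn S (s + 1) = -1}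

/-- Inter-half-excursion times `τᵢ = tᵢ - tᵢ₋₁`, for `i ≥ 1`. -/
def tau (S : ℕ → ℝ) (i : ℕ) : ℕ :=
  crossTime S i - crossTime S (i - 1)

private lemma walkSgn_cases (S : ℕ → ℝ) (n : ℕ) : walkSgn S n = 1 ∨ walkSgn S n = -1 := by
  induction n with
  | zero => left; rfl
  | succ n ih =>
    rw [walkSgn]
    split_ifs <;> simp [ih]

/-- For any real sequence `S` with `S₀ = 0`, `sgn(S₁) = +1` and all the
crossing times `t₁, …, t_{2k}` finite (the defining sets nonempty), and any `x ∈ [0,1)`,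
`k ≥ 1`: `∑_{i=1}^s sgn(Sᵢ) > x·s` for all `1 ≤ s ≤ t_{2k}` iff
`∑_{i=1}^m (τ_{2i-1} - τ_{2i}) > x·∑_{i=1}^m (τ_{2i-1} + τ_{2i})` for all `1 ≤ m ≤ k`. -/
theorem sign_sum_event_iff_excursion_event
    (S : ℕ → ℝ) (hS0 : S 0 = 0) (x : ℝ) (hx0 : 0 ≤ x) (hx1 : x < 1)
    (k : ℕ) (hk : 1 ≤ k)
    (hsgn1 : walkSgn S 1 = 1)
    (hfin : ∀ i < 2 * k,
      {s : ℕ | crossTime S i < s ∧ walkSgn S s * walkSgn S (s + 1) = -1}.Nonempty) :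
    (∀ s : ℕ, 1 ≤ s → s ≤ crossTime S (2 * k) →
        x * (s : ℝ) < ∑ i ∈ Icc 1 s, (walkSgn S i : ℝ)) ↔
    (∀ m : ℕ, 1 ≤ m → m ≤ k →
        x * ∑ i ∈ Icc 1 m, ((tau S (2 * i - 1) : ℝ) + (tau S (2 * i) : ℝ)) <
          ∑ i ∈ Icc 1 m, ((tau S (2 * i - 1) : ℝ) - (tau S (2 * i) : ℝ))) := by
  set t : ℕ → ℕ := crossTime S with htdef
  set F : ℕ → ℝ := fun s => ∑ i ∈ Icc 1 s, (walkSgn S i : ℝ) with hFdef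
  have ht0 : t 0 = 0 := rfl
  have hF0 : F 0 = 0 := by simp [hFdef]
  have hFsucc : ∀ s, F (s + 1) = F s + (walkSgn S (s + 1) : ℝ) := by
    intro s
    simp [hFdef, Finset.sum_Icc_succ_top (by omega : 1 ≤ s + 1)]
  have hmem : ∀ i < 2 * k,
      t i < t (i + 1) ∧ walkSgn S (t (i + 1)) * walkSgn S (t (i + 1) + 1) = -1 := by
    intro i hi
    exact Nat.sInf_mem (hfin i hi)
  have hconst : ∀ i < 2 * k, ∀ s, t i < s → s < t (i + 1) →
      walkSgn S (s + 1) = walkSgn S s := by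
    intro i hi s h1 h2
    have hns : s ∉ {s : ℕ | t i < s ∧ walkSgn S s * walkSgn S (s + 1) = -1} :=
      Nat.notMem_of_lt_sInf h2
    have hne : walkSgn S s * walkSgn S (s + 1) ≠ -1 := fun hc => hns ⟨h1, hc⟩
    rcases walkSgn_cases S s with h | h <;> rcases walkSgn_cases S (s + 1) with h' | h' <;>
      simp_all
  have hsgn : ∀ j, j < 2 * k → ∀ n, t j < n → n ≤ t (j + 1) → walkSgn S n = (-1) ^ j := by
    intro j
    induction j with
    | zero =>
      intro hj n hn1 hn2
      rw [ht0] at hn1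
      revert hn2
      induction n, hn1 using Nat.le_induction with
      | base => intro _; simpa using hsgn1
      | succ n hn ih =>
        intro hn2
        rw [hconst 0 hj n (by rw [ht0]; omega) (by omega), ih (by omega)]
    | succ j ihj =>
      intro hj n hn1 hn2
      have hjk : j < 2 * k := by omega
      have hflip := (hmem j hjk).2
      have hprev : walkSgn S (t (j + 1)) = (-1) ^ j := ihj hjk (t (j + 1)) (hmem j hjk).1 le_rfl
      have hbase : walkSgn S (t (j + 1) + 1) = (-1) ^ (j + 1) := by
        rcases Nat.even_or_odd j with he | ho
        · rw [hprev, he.neg_one_pow] at hflip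
          rw [(he.add_one).neg_one_pow]
          omega
        · rw [hprev, ho.neg_one_pow] at hflip
          rw [(ho.add_one).neg_one_pow]
          omega
      revert hn2
      induction n, hn1 using Nat.le_induction with
      | base => intro _; exact hbase
      | succ n hn ih =>
        intro hn2
        rw [hconst (j + 1) hj n (by omega) (by omega), ih (by omega)]
  have hF : ∀ j, j < 2 * k → ∀ s, t j ≤ s → s ≤ t (j + 1) →
      F s = F (t j) + (-1 : ℝ) ^ j * ((s : ℝ) - (t j : ℝ)) := by
    intro j hj s hs1
    induction s, hs1 using Nat.le_induction with
    | base => intro _; simp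
    | succ s hs ih =>
      intro hs2
      have h1 := hsgn j hj (s + 1) (by omega) hs2
      rw [hFsucc, ih (by omega), h1]
      push_cast
      ring
  have hmono : ∀ i j, i ≤ j → j ≤ 2 * k → t i ≤ t j := by
    intro i j
    induction j with
    | zero => intro h _; rw [Nat.le_zero.mp h]
    | succ j ih =>
      intro hij hj
      rcases Nat.eq_or_lt_of_le hij with h | h
      · rw [h]
      · exact le_trans (ih (by omega) (by omega)) (le_of_lt (hmem j (by omega)).1)
  have htau : ∀ i, 1 ≤ i → i ≤ 2 * k → (tau S i : ℝ) = (t i : ℝ) - (t (i - 1) : ℝ) := by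
    intro i h1 h2
    have hle : t (i - 1) ≤ t i := hmono (i - 1) i (by omega) h2
    have he : tau S i = t i - t (i - 1) := rfl
    rw [he, Nat.cast_sub hle]
  have hsum : ∀ m, m ≤ k →
      (t (2 * m) : ℝ) = (∑ i ∈ Icc 1 m, ((tau S (2 * i - 1) : ℝ) + (tau S (2 * i) : ℝ))) ∧
      F (t (2 * m)) = ∑ i ∈ Icc 1 m, ((tau S (2 * i - 1) : ℝ) - (tau S (2 * i) : ℝ)) := by
    intro m
    induction m with
    | zero => intro _; constructor <;> simp [ht0, hF0]
    | succ m ih =>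
      intro hm
      obtain ⟨h1, h2⟩ := ih (by omega)
      have hlt1 : 2 * m < 2 * k := by omega
      have hlt2 : 2 * m + 1 < 2 * k := by omega
      have ha : t (2 * m) ≤ t (2 * m + 1) := le_of_lt (hmem _ hlt1).1
      have hb : t (2 * m + 1) ≤ t (2 * m + 2) := le_of_lt (hmem _ hlt2).1
      have hFa : F (t (2 * m + 1)) =
          F (t (2 * m)) + (-1 : ℝ) ^ (2 * m) * ((t (2 * m + 1) : ℝ) - (t (2 * m) : ℝ)) :=
        hF (2 * m) hlt1 _ ha le_rfl
      have hFb : F (t (2 * m + 2)) =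
          F (t (2 * m + 1)) + (-1 : ℝ) ^ (2 * m + 1) * ((t (2 * m + 2) : ℝ) - (t (2 * m + 1) : ℝ)) :=
        hF (2 * m + 1) hlt2 _ hb le_rfl
      have hp1 : (-1 : ℝ) ^ (2 * m) = 1 := by rw [pow_mul]; norm_num
      have hp2 : (-1 : ℝ) ^ (2 * m + 1) = -1 := by rw [pow_succ, hp1]; ring
      have ht1 := htau (2 * m + 1) (by omega) (by omega)
      have ht2 := htau (2 * m + 2) (by omega) (by omega)
      rw [hp1] at hFa
      rw [hp2] at hFb
      have e1 : 2 * (m + 1) - 1 = 2 * m + 1 := by omega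
      have e2 : 2 * (m + 1) = 2 * m + 2 := by omega
      have e3 : (2 * m + 1) - 1 = 2 * m := by omega
      have e4 : (2 * m + 2) - 1 = 2 * m + 1 := by omega
      rw [e3] at ht1
      rw [e4] at ht2
      rw [Finset.sum_Icc_succ_top (by omega : 1 ≤ m + 1),
        Finset.sum_Icc_succ_top (by omega : 1 ≤ m + 1), e1, e2, ht1, ht2, ← h1, ← h2]
      constructor
      · linarith [hFa, hFb]
      · linarith [hFa, hFb]
  have hkey : ∀ m, 1 ≤ m → m ≤ k →
      ((x * ∑ i ∈ Icc 1 m, ((tau S (2 * i - 1) : ℝ) + (tau S (2 * i) : ℝ)) <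
          ∑ i ∈ Icc 1 m, ((tau S (2 * i - 1) : ℝ) - (tau S (2 * i) : ℝ))) ↔
        x * (t (2 * m) : ℝ) < F (t (2 * m))) := by
    intro m _ hm
    rw [(hsum m hm).1, (hsum m hm).2]
  constructor
  · intro h m hm1 hm2
    rw [hkey m hm1 hm2]
    have h01 : t 0 < t 1 := (hmem 0 (by omega)).1
    rw [ht0] at h01
    have h1 : 1 ≤ t (2 * m) := le_trans h01 (hmono 1 (2 * m) (by omega) (by omega))
    have h2 : t (2 * m) ≤ t (2 * k) := hmono _ _ (by omega) le_rfl
    exact h (t (2 * m)) h1 h2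
  · intro h
    have hkey' : ∀ m, 1 ≤ m → m ≤ k → x * (t (2 * m) : ℝ) < F (t (2 * m)) :=
      fun m h1 h2 => (hkey m h1 h2).mp (h m h1 h2)
    have main : ∀ m, m ≤ k → ∀ s, 1 ≤ s → s ≤ t (2 * m) → x * (s : ℝ) < F s := by
      intro m
      induction m with
      | zero =>
        intro _ s hs1 hs2
        have h0 : t (2 * 0) = 0 := ht0
        omega
      | succ m ih =>
        intro hm s hs1 hs2
        have hlt1 : 2 * m < 2 * k := by omega
        have hlt2 : 2 * m + 1 < 2 * k := by omega
        rw [show 2 * (m + 1) = 2 * m + 2 from by omega] at hs2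
        by_cases hc : s ≤ t (2 * m)
        · exact ih (by omega) s hs1 hc
        push_neg at hc
        have hx2m : x * (t (2 * m) : ℝ) ≤ F (t (2 * m)) := by
          rcases Nat.eq_zero_or_pos m with h0 | h0
          · subst h0
            have h0' : t (2 * 0) = 0 := ht0
            rw [h0', hF0]
            simp
          · exact le_of_lt (hkey' m h0 (by omega))
        by_cases hc2 : s ≤ t (2 * m + 1)
        · have hFs : F s = F (t (2 * m)) + (-1 : ℝ) ^ (2 * m) * ((s : ℝ) - (t (2 * m) : ℝ)) :=
            hF (2 * m) hlt1 s (le_of_lt hc) hc2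
          have hp1 : (-1 : ℝ) ^ (2 * m) = 1 := by rw [pow_mul]; norm_num
          have hcs : (t (2 * m) : ℝ) + 1 ≤ (s : ℝ) := by exact_mod_cast hc
          rw [hFs, hp1]
          nlinarith [hx2m, hcs, hx0, hx1]
        · push_neg at hc2
          have hp2 : (-1 : ℝ) ^ (2 * m + 1) = -1 := by
            rw [pow_succ, pow_mul]; norm_num
          have hFs : F s = F (t (2 * m + 1)) + (-1 : ℝ) ^ (2 * m + 1) * ((s : ℝ) - (t (2 * m + 1) : ℝ)) :=
            hF (2 * m + 1) hlt2 s (le_of_lt hc2) hs2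
          have hFb : F (t (2 * m + 2)) =
              F (t (2 * m + 1)) + (-1 : ℝ) ^ (2 * m + 1) * ((t (2 * m + 2) : ℝ) - (t (2 * m + 1) : ℝ)) :=
            hF (2 * m + 1) hlt2 _ (le_of_lt (hmem _ hlt2).1) le_rfl
          have hkey2 : x * (t (2 * m + 2) : ℝ) < F (t (2 * m + 2)) := by
            have h' := hkey' (m + 1) (by omega) hm
            rwa [show 2 * (m + 1) = 2 * m + 2 from by omega] at h'
          rw [hp2] at hFs hFb
          have hcs : (s : ℝ) ≤ (t (2 * m + 2) : ℝ) := by exact_mod_cast hs2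
          rw [hFs]
          nlinarith [hkey2, hFb, hcs, hx0]
    intro s hs1 hs2
    exact main k le_rfl s hs1 hs2
end
end
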